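/- Let G be a finite group and A a finite set of size q ≥ 2. Let x, y ∈ A^G with xG ≠ yG. There exists a non-invertible cellular automaton τ over G and A with (xG)τ = yG if and only if G_x is contained in some conjugate of G_y. -/
import Mathlib


/-- The right action of `G` on configurations `A^G`: `(x · g) h = x (h g⁻¹)`. -/
def confMul {G A : Type*} [Group G] (x : G → A) (g : G) : G → A := fun h => x (h * g⁻¹)

/-- The `G`-orbit of a configuration `x ∈ A^G`. -/
def orbitOf {G A : Type*} [Group G] (x : G → A) : Set (G → A) := {y | ∃ g : G, y = confMul x g}

/-- `τ` is `G`-equivariant, i.e. a cellular automaton. -/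
def equivariant {G A : Type*} [Group G] (τ : (G → A) → (G → A)) : Prop :=
  ∀ x g, τ (confMul x g) = confMul (τ x) g

lemma confMul_comp {G A : Type*} [Group G] (x : G → A) (a b : G) :
    confMul (confMul x a) b = confMul x (a * b) := by
  funext h
  simp [confMul, mul_assoc]

lemma confMul_one {G A : Type*} [Group G] (x : G → A) : confMul x 1 = x := by
  funext h; simp [confMul]

lemma mem_orbitOf {G A : Type*} [Group G] {x z : G → A} :
    z ∈ orbitOf x ↔ ∃ g : G, z = confMul x g := Iff.rfl

lemma orbit_eq_of_mem {G A : Type*} [Group G] {x y : G → A} (h : y ∈ orbitOf x) :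
    orbitOf x = orbitOf y := by
  obtain ⟨k, rfl⟩ := h
  ext z
  constructor
  · rintro ⟨m, rfl⟩
    exact ⟨k⁻¹ * m, by rw [confMul_comp, mul_inv_cancel_left]⟩
  · rintro ⟨m, rfl⟩
    exact ⟨k * m, confMul_comp x k m⟩

/-- For `x, y ∈ A^G` with `xG ≠ yG`, there is a non-invertible cellular automaton mapping
`xG` onto `yG` if and only if `G_x` is contained in some conjugate of `G_y`. -/
theorem stmt17 {G A : Type*} [Group G] [Fintype G] [Fintype A]
    (hA : 2 ≤ Fintype.card A) (x y : G → A) (hxy : orbitOf x ≠ orbitOf y) :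
    (∃ τ : (G → A) → (G → A), equivariant τ ∧ ¬Function.Bijective τ ∧
        τ '' orbitOf x = orbitOf y) ↔
      ∃ g : G, ∀ h : G, confMul x h = x → confMul y (g * h * g⁻¹) = y := by
  classical
  constructor
  · rintro ⟨τ, heq, -, himg⟩
    have hx : τ x ∈ orbitOf y := by
      rw [← himg]
      exact ⟨x, ⟨1, (confMul_one x).symm⟩, rfl⟩
    obtain ⟨k, hk⟩ := hx
    refine ⟨k, fun h hh => ?_⟩
    have hF : confMul y (k * h) = confMul y k := by
      rw [← confMul_comp, ← hk, ← heq, hh, hk]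
    calc confMul y (k * h * k⁻¹) = confMul (confMul y (k * h)) k⁻¹ :=
          (confMul_comp _ _ _).symm
      _ = confMul (confMul y k) k⁻¹ := by rw [hF]
      _ = y := by rw [confMul_comp, mul_inv_cancel, confMul_one]
  · rintro ⟨g, hg⟩
    have hyx : y ∉ orbitOf x := fun h => hxy (orbit_eq_of_mem h)
    have L : ∀ h h' : G, confMul x h = confMul x h' →
        confMul y (g * h) = confMul y (g * h') := by
      intro h h' he
      have h1 : confMul x (h' * h⁻¹) = x := by
        rw [← confMul_comp, ← he, confMul_comp, mul_inv_cancel, confMul_one]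
      have h2 := hg _ h1
      calc confMul y (g * h)
          = confMul (confMul y (g * (h' * h⁻¹) * g⁻¹)) (g * h) := by rw [h2]
        _ = confMul y (g * h') := by rw [confMul_comp]; congr 1; group
    set τ : (G → A) → (G → A) := fun z =>
      if hz : z ∈ orbitOf x then confMul y (g * Classical.choose hz) else z with hτ
    have hτ_spec : ∀ (z) (hz : z ∈ orbitOf x) (k : G), z = confMul x k →
        τ z = confMul y (g * k) := by
      intro z hz k hk
      simp only [hτ, dif_pos hz]
      exact L _ _ ((Classical.choose_spec hz).symm.trans hk)
    have hτ_not : ∀ z, z ∉ orbitOf x → τ z = z := fun z hz => dif_neg hz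
    refine ⟨τ, ?_, ?_, ?_⟩
    · intro z k
      by_cases hz : z ∈ orbitOf x
      · obtain ⟨m, hm⟩ := hz
        have hm' : confMul z k = confMul x (m * k) := by rw [hm, confMul_comp]
        rw [hτ_spec z ⟨m, hm⟩ m hm, hτ_spec _ ⟨m * k, hm'⟩ (m * k) hm',
          confMul_comp, mul_assoc]
      · have hz' : confMul z k ∉ orbitOf x := by
          rintro ⟨m, hm⟩
          exact hz ⟨m * k⁻¹, by
            rw [← confMul_comp, ← hm, confMul_comp, mul_inv_cancel, confMul_one]⟩
        rw [hτ_not _ hz', hτ_not _ hz]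
    · intro hb
      have h1 : τ y = y := hτ_not y hyx
      have h2 : τ (confMul x g⁻¹) = y := by
        rw [hτ_spec _ ⟨g⁻¹, rfl⟩ g⁻¹ rfl, mul_inv_cancel, confMul_one]
      have h3 : confMul x g⁻¹ = y := hb.1 (h2.trans h1.symm)
      exact hyx ⟨g⁻¹, h3.symm⟩
    · ext z
      constructor
      · rintro ⟨w, ⟨m, rfl⟩, rfl⟩
        exact ⟨g * m, hτ_spec _ ⟨m, rfl⟩ m rfl⟩
      · rintro ⟨m, rfl⟩
        refine ⟨confMul x (g⁻¹ * m), ⟨g⁻¹ * m, rfl⟩, ?_⟩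
        rw [hτ_spec _ ⟨g⁻¹ * m, rfl⟩ _ rfl, mul_inv_cancel_left]
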